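/- arXiv:1405.2141 — 4 statements merged into one kernel-verified Lean document; each statement's English description precedes it below -/
import Mathlib

section
/- Let φ : (0,∞) → [0,∞) be a Bernstein function with representation φ(λ) = bλ + ∫_{(0,∞)} (1 − e^{−λt}) μ(dt), where b ≥ 0 and μ is a measure on (0,∞) with ∫_{(0,∞)} (1 ∧ t) μ(dt) < ∞. If φ satisfies assumption (A-3), then b = 0. -/
open Set Filter MeasureTheory
open scoped ContDiff

/-- A Bernstein function: a smooth function on `(0,∞)`, nonnegative there, whose derivatives
alternate in sign: `(-1)^n φ^(n)(λ) ≤ 0` for every `n ≥ 1` and `λ > 0`. -/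
def IsBernstein (φ : ℝ → ℝ) : Prop :=
  ContDiffOn ℝ (⊤ : ℕ∞) φ (Set.Ioi 0) ∧
  (∀ x : ℝ, 0 < x → 0 ≤ φ x) ∧
  ∀ n : ℕ, 1 ≤ n → ∀ x : ℝ, 0 < x → (-1 : ℝ) ^ n * iteratedDeriv n φ x ≤ 0

private lemma bernstein_integrable_aux (μ : Measure ℝ)
    (hμ : (∫⁻ t in Set.Ioi (0 : ℝ), ENNReal.ofReal (min 1 t) ∂μ) < ⊤)
    (lam : ℝ) (hlam : 0 < lam) :
    IntegrableOn (fun t => 1 - Real.exp (-(lam * t))) (Set.Ioi 0) μ := by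
  constructor
  · exact (Continuous.aestronglyMeasurable (by continuity)).restrict
  · rw [hasFiniteIntegral_iff_ofReal ?_]
    · calc ∫⁻ t in Set.Ioi 0, ENNReal.ofReal (1 - Real.exp (-(lam * t))) ∂μ
          ≤ ∫⁻ t in Set.Ioi 0, ENNReal.ofReal (max 1 lam) * ENNReal.ofReal (min 1 t) ∂μ := by
            apply setLIntegral_mono ((ENNReal.measurable_ofReal.comp (measurable_const.min measurable_id)).const_mul _)
            intro t ht
            simp only [Function.comp_apply, id_eq]
            rw [← ENNReal.ofReal_mul (le_trans zero_le_one (le_max_left 1 lam))]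
            apply ENNReal.ofReal_le_ofReal
            have ht0 : (0:ℝ) < t := ht
            have hexp := Real.add_one_le_exp (-(lam * t))
            rcases le_total 1 t with h1 | h1
            · have : Real.exp (-(lam * t)) ≥ 0 := Real.exp_nonneg _
              have : min 1 t = 1 := min_eq_left h1
              rw [this]
              nlinarith [Real.exp_nonneg (-(lam * t)), le_max_left 1 lam]
            · have : min 1 t = t := min_eq_right h1
              rw [this]
              nlinarith [le_max_right (1:ℝ) lam, ht0.le]
        _ = ENNReal.ofReal (max 1 lam) * ∫⁻ t in Set.Ioi 0, ENNReal.ofReal (min 1 t) ∂μ := by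
            rw [lintegral_const_mul' _ _ ENNReal.ofReal_ne_top]
        _ < ⊤ := ENNReal.mul_lt_top ENNReal.ofReal_lt_top hμ
    · refine (ae_restrict_iff' measurableSet_Ioi).mpr (ae_of_all _ fun t ht => ?_)
      have ht0 : (0:ℝ) < t := ht
      have : Real.exp (-(lam * t)) ≤ 1 := by
        rw [Real.exp_le_one_iff]; nlinarith
      simp only [Pi.zero_apply]; linarith

private lemma bernstein_integral_nonneg (μ : Measure ℝ) (lam : ℝ) (hlam : 0 < lam) :
    0 ≤ ∫ t in Set.Ioi (0 : ℝ), (1 - Real.exp (-(lam * t))) ∂μ := by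
  apply setIntegral_nonneg measurableSet_Ioi
  intro t ht
  have ht0 : (0:ℝ) < t := ht
  have : Real.exp (-(lam * t)) ≤ 1 := by
    rw [Real.exp_le_one_iff]; nlinarith
  linarith

private lemma bernstein_integral_mono (μ : Measure ℝ)
    (hμ : (∫⁻ t in Set.Ioi (0 : ℝ), ENNReal.ofReal (min 1 t) ∂μ) < ⊤)
    (a c : ℝ) (ha : 0 < a) (hac : a ≤ c) :
    (∫ t in Set.Ioi (0 : ℝ), (1 - Real.exp (-(a * t))) ∂μ) ≤
      ∫ t in Set.Ioi (0 : ℝ), (1 - Real.exp (-(c * t))) ∂μ := by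
  apply setIntegral_mono_on (bernstein_integrable_aux μ hμ a ha)
    (bernstein_integrable_aux μ hμ c (lt_of_lt_of_le ha hac)) measurableSet_Ioi
  intro t ht
  have ht0 : (0:ℝ) < t := ht
  have : Real.exp (-(c * t)) ≤ Real.exp (-(a * t)) := by
    apply Real.exp_le_exp.mpr; nlinarith
  linarith

/-- If a Bernstein function `φ(λ) = bλ + ∫_{(0,∞)} (1 - e^{-λt}) μ(dt)`, with `b ≥ 0` and
`∫ (1 ∧ t) μ(dt) < ∞`, satisfies (A-3), then `b = 0`. -/
theorem bernstein_drift_eq_zero (φ : ℝ → ℝ) (hφ : IsBernstein φ)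
    (b : ℝ) (hb : 0 ≤ b) (μ : Measure ℝ)
    (hμ : (∫⁻ t in Set.Ioi (0 : ℝ), ENNReal.ofReal (min 1 t) ∂μ) < ⊤)
    (hrep : ∀ lam : ℝ, 0 < lam →
      φ lam = b * lam + ∫ t in Set.Ioi (0 : ℝ), (1 - Real.exp (-(lam * t))) ∂μ)
    (σ lam₀ δ : ℝ) (hσ : 0 < σ) (hlam₀ : 0 < lam₀) (hδ0 : 0 < δ) (hδ1 : δ ≤ 1)
    (hA3 : ∀ t : ℝ, 1 ≤ t → ∀ lam : ℝ, lam₀ ≤ lam →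
      deriv φ (lam * t) / deriv φ lam ≤ σ * t ^ (-δ)) :
    b = 0 := by
  by_contra hb0
  have hbpos : 0 < b := lt_of_le_of_ne hb (Ne.symm hb0)
  obtain ⟨hsmooth, hnonneg, hsign⟩ := hφ
  have hsmooth' : ContDiffOn ℝ ∞ φ (Set.Ioi 0) := hsmooth.of_le (by simp)
  have hcont : ContinuousOn φ (Set.Ioi 0) := hsmooth'.continuousOn
  have hdiff : DifferentiableOn ℝ φ (Set.Ioi 0) := hsmooth'.differentiableOn (by simp)
  have hderiv_cd : ContDiffOn ℝ ∞ (deriv φ) (Set.Ioi 0) :=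
    ((contDiffOn_infty_iff_deriv_of_isOpen isOpen_Ioi).mp hsmooth').2
  -- deriv φ is antitone on (0,∞)
  have hanti : AntitoneOn (deriv φ) (Set.Ioi 0) := by
    apply antitoneOn_of_deriv_nonpos (convex_Ioi 0) hderiv_cd.continuousOn
    · rw [interior_Ioi]; exact hderiv_cd.differentiableOn (by simp)
    · intro x hx
      rw [interior_Ioi] at hx
      have h2 := hsign 2 (by norm_num) x hx
      have heq : iteratedDeriv 2 φ x = deriv (deriv φ) x := by
        rw [iteratedDeriv_succ, iteratedDeriv_one]
      rw [heq] at h2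
      nlinarith
  -- deriv φ ≥ b on (0,∞)
  have hge : ∀ lam : ℝ, 0 < lam → b ≤ deriv φ lam := by
    intro lam hl
    have h2l : lam < 2 * lam := by linarith
    have hIcc : Set.Icc lam (2 * lam) ⊆ Set.Ioi 0 := fun x hx => lt_of_lt_of_le hl hx.1
    have hIoo : Set.Ioo lam (2 * lam) ⊆ Set.Ioi 0 := fun x hx => lt_trans hl hx.1
    obtain ⟨c, hc, hceq⟩ := exists_deriv_eq_slope φ h2l (hcont.mono hIcc) (hdiff.mono hIoo)
    have hslope : b ≤ (φ (2 * lam) - φ lam) / (2 * lam - lam) := by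
      rw [hrep lam hl, hrep (2 * lam) (by linarith)]
      have hmono := bernstein_integral_mono μ hμ lam (2 * lam) hl (by linarith)
      rw [le_div_iff₀ (by linarith)]
      nlinarith
    have := hanti (Set.mem_Ioi.mpr hl) (hIoo hc) hc.1.le
    rw [hceq] at this
    linarith
  -- contradiction using (A-3)
  set A := deriv φ lam₀ with hA
  have hApos : 0 < A := lt_of_lt_of_le hbpos (hge lam₀ hlam₀)
  have htend : Tendsto (fun t : ℝ => σ * t ^ (-δ)) atTop (nhds 0) := by
    have := (tendsto_rpow_neg_atTop hδ0).const_mul σ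
    simpa using this
  have hev : ∀ᶠ t : ℝ in atTop, σ * t ^ (-δ) < b / A :=
    htend.eventually_lt_const (div_pos hbpos hApos)
  obtain ⟨t, ht1, htlt⟩ := ((eventually_ge_atTop (1:ℝ)).and hev).exists
  have hkey := hA3 t ht1 lam₀ le_rfl
  have hlt : 0 < lam₀ * t := by nlinarith
  have hbt : b ≤ deriv φ (lam₀ * t) := hge _ hlt
  have : b / A ≤ deriv φ (lam₀ * t) / A := by gcongr
  linarith [lt_of_le_of_lt (le_trans this hkey) htlt]
end

section
/- Let φ : (0,∞) → [0,∞) be a Bernstein function with φ(0+) = 0 satisfying assumption (A-3) with constants σ > 0, λ₀ > 0 and δ ∈ (0,1]. Then for every ε > 0 there exists a constant c = c(ε) > 0 such that φ(λx)/φ(λ) ≤ c x^{1−δ+ε} for all x ≥ 1 and all λ ≥ λ₀. -/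
open Set Filter

/-- If `φ` is a Bernstein function with `φ(0+) = 0` satisfying (A-3) with constants
`σ > 0`, `λ₀ > 0`, `δ ∈ (0,1]`, then for every `ε > 0` there exists `c > 0` such that
`φ(λx)/φ(λ) ≤ c x^{1-δ+ε}` for all `x ≥ 1` and `λ ≥ λ₀`. -/
theorem bernstein_ratio_upper (φ : ℝ → ℝ) (hφ : IsBernstein φ)
    (h0 : Filter.Tendsto φ (nhdsWithin 0 (Set.Ioi 0)) (nhds 0))
    (σ lam₀ δ : ℝ) (hσ : 0 < σ) (hlam₀ : 0 < lam₀) (hδ0 : 0 < δ) (hδ1 : δ ≤ 1)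
    (hA3 : ∀ t : ℝ, 1 ≤ t → ∀ lam : ℝ, lam₀ ≤ lam →
      deriv φ (lam * t) / deriv φ lam ≤ σ * t ^ (-δ))
    (ε : ℝ) (hε : 0 < ε) :
    ∃ c : ℝ, 0 < c ∧ ∀ x : ℝ, 1 ≤ x → ∀ lam : ℝ, lam₀ ≤ lam →
      φ (lam * x) / φ lam ≤ c * x ^ (1 - δ + ε) := by
  obtain ⟨hsm, hnn, halt⟩ := hφ
  set β : ℝ := 1 - δ + ε with hβdef
  have hβ : 0 < β := by simp only [hβdef]; linarith
  -- basic differentiability facts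
  have hdiffAt : ∀ y : ℝ, 0 < y → DifferentiableAt ℝ φ y := fun y hy =>
    ((hsm.differentiableOn (by simp)) y hy).differentiableAt (isOpen_Ioi.mem_nhds hy)
  have hd1 : ContDiffOn ℝ 1 (deriv φ) (Ioi 0) :=
    hsm.deriv_of_isOpen isOpen_Ioi (by exact WithTop.coe_le_coe.2 le_top)
  have hderiv_cont : ContinuousOn (deriv φ) (Ioi 0) := hd1.continuousOn
  have hderiv_diff : DifferentiableOn ℝ (deriv φ) (Ioi 0) := hd1.differentiableOn one_ne_zero
  -- first derivative is nonnegative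
  have hderiv_nonneg : ∀ y : ℝ, 0 < y → 0 ≤ deriv φ y := by
    intro y hy
    have h1 := halt 1 le_rfl y hy
    rw [iteratedDeriv_one] at h1
    nlinarith [h1]
  -- second derivative is nonpositive
  have hd2 : ∀ y : ℝ, 0 < y → deriv (deriv φ) y ≤ 0 := by
    intro y hy
    have h2 := halt 2 (by norm_num) y hy
    have e : iteratedDeriv 2 φ = deriv (deriv φ) := by
      rw [show (2 : ℕ) = 1 + 1 from rfl, iteratedDeriv_succ, iteratedDeriv_one]
    rw [e] at h2
    nlinarith [h2]
  -- the derivative is antitone on (0,∞)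
  have hanti : AntitoneOn (deriv φ) (Ioi 0) := by
    apply antitoneOn_of_deriv_nonpos (convex_Ioi 0) hderiv_cont
    · rw [interior_Ioi]; exact hderiv_diff
    · intro y hy; rw [interior_Ioi] at hy; exact hd2 y hy
  -- key: l * φ'(l) ≤ φ(l)
  have key1 : ∀ l : ℝ, 0 < l → l * deriv φ l ≤ φ l := by
    intro l hl
    have hev : ∀ᶠ u in (nhdsWithin 0 (Set.Ioi 0)),
        (l - u) * deriv φ l ≤ φ l - φ u := by
      filter_upwards [Ioo_mem_nhdsGT_of_mem (left_mem_Ico.2 hl)] with u hu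
      have hu0 : 0 < u := hu.1
      have hul : u < l := hu.2
      have hsub : Icc u l ⊆ Ioi 0 := fun s hs => lt_of_lt_of_le hu0 hs.1
      obtain ⟨c, hc, hceq⟩ := exists_deriv_eq_slope φ hul
        ((hsm.continuousOn).mono hsub)
        (fun y hy => (hdiffAt y (lt_trans hu0 hy.1)).differentiableWithinAt)
      have hc0 : 0 < c := lt_trans hu0 hc.1
      have h1 : deriv φ l ≤ deriv φ c :=
        hanti (mem_Ioi.2 hc0) (mem_Ioi.2 hl) hc.2.le
      rw [hceq] at h1
      have hlu : 0 < l - u := sub_pos.2 hul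
      have := (le_div_iff₀ hlu).1 h1
      linarith [this]
    have ht1 : Tendsto (fun u : ℝ => (l - u) * deriv φ l) (nhdsWithin 0 (Set.Ioi 0))
        (nhds (l * deriv φ l)) := by
      have : Tendsto (fun u : ℝ => (l - u) * deriv φ l) (nhds 0)
          (nhds ((l - 0) * deriv φ l)) :=
        (tendsto_const_nhds.sub tendsto_id).mul_const _
      simpa using this.mono_left nhdsWithin_le_nhds
    have ht2 : Tendsto (fun u : ℝ => φ l - φ u) (nhdsWithin 0 (Set.Ioi 0))
        (nhds (φ l - 0)) := tendsto_const_nhds.sub h0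
    have := le_of_tendsto_of_tendsto ht1 ht2 hev
    simpa using this
  -- the constant
  refine ⟨1 + σ / β, by positivity, ?_⟩
  intro x hx lam hlam
  have hl : 0 < lam := lt_of_lt_of_le hlam₀ hlam
  have hx0 : 0 < x := lt_of_lt_of_le one_pos hx
  have hb : lam ≤ lam * x := le_mul_of_one_le_right hl.le hx
  have hbpos : 0 < lam * x := by positivity
  have hsub : Icc lam (lam * x) ⊆ Ioi 0 := fun s hs => lt_of_lt_of_le hl hs.1
  have huIcc : uIcc lam (lam * x) = Icc lam (lam * x) := uIcc_of_le hb
  have hxβ : 1 ≤ x ^ β := Real.one_le_rpow hx hβ.le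
  -- FTC
  have hint1 : IntervalIntegrable (deriv φ) MeasureTheory.volume lam (lam * x) :=
    (hderiv_cont.mono (by rw [huIcc]; exact hsub)).intervalIntegrable
  have hFTC : ∫ s in lam..(lam * x), deriv φ s = φ (lam * x) - φ lam :=
    intervalIntegral.integral_deriv_eq_sub
      (fun y hy => hdiffAt y (hsub (by rwa [huIcc] at hy))) hint1
  set C : ℝ := σ * deriv φ lam * lam ^ (1 - β) with hC
  -- pointwise bound on the derivative
  have hbound : ∀ s ∈ Icc lam (lam * x), deriv φ s ≤ C * s ^ (β - 1) := by
    intro s hs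
    have hspos : 0 < s := hsub hs
    have ht : 1 ≤ s / lam := (one_le_div hl).2 hs.1
    have hkey : deriv φ s ≤ σ * (s / lam) ^ (-δ) * deriv φ lam := by
      have hA := hA3 (s / lam) ht lam hlam
      rw [mul_div_cancel₀ _ hl.ne'] at hA
      rcases eq_or_lt_of_le (hderiv_nonneg lam hl) with h0' | h0'
      · have hle : deriv φ s ≤ deriv φ lam :=
          hanti (mem_Ioi.2 hl) (mem_Ioi.2 hspos) hs.1
        rw [← h0'] at hle ⊢
        simpa using hle
      · exact (div_le_iff₀ h0').1 hA
    have hpow : (s / lam) ^ (-δ) ≤ (s / lam) ^ (β - 1) :=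
      Real.rpow_le_rpow_of_exponent_le ht (by simp only [hβdef]; linarith)
    have hsplit : (s / lam) ^ (β - 1) = lam ^ (1 - β) * s ^ (β - 1) := by
      rw [Real.div_rpow hspos.le hl.le, div_eq_mul_inv, ← Real.rpow_neg hl.le,
        show -(β - 1) = 1 - β by ring, mul_comm]
    calc deriv φ s ≤ σ * (s / lam) ^ (-δ) * deriv φ lam := hkey
      _ ≤ σ * (s / lam) ^ (β - 1) * deriv φ lam := by
          apply mul_le_mul_of_nonneg_right _ (hderiv_nonneg lam hl)
          exact mul_le_mul_of_nonneg_left hpow hσ.le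
      _ = C * s ^ (β - 1) := by rw [hsplit, hC]; ring
  have hint2 : IntervalIntegrable (fun s : ℝ => C * s ^ (β - 1))
      MeasureTheory.volume lam (lam * x) :=
    (intervalIntegral.intervalIntegrable_rpow' (by simp only [hβdef]; linarith)).const_mul C
  have hIle : (∫ s in lam..(lam * x), deriv φ s) ≤
      ∫ s in lam..(lam * x), C * s ^ (β - 1) :=
    intervalIntegral.integral_mono_on hb hint1 hint2 hbound
  have hIcalc : (∫ s in lam..(lam * x), C * s ^ (β - 1)) =
      C * (((lam * x) ^ β - lam ^ β) / β) := by
    rw [intervalIntegral.integral_const_mul,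
      integral_rpow (Or.inl (by simp only [hβdef]; linarith)), sub_add_cancel]
  -- assemble the estimate
  have hmulβ : (lam * x) ^ β = lam ^ β * x ^ β := Real.mul_rpow hl.le hx0.le
  have hlamβ : lam ^ (1 - β) * lam ^ β = lam := by
    rw [← Real.rpow_add hl, sub_add_cancel, Real.rpow_one]
  have hmain : φ (lam * x) - φ lam ≤
      σ * (lam * deriv φ lam) * ((x ^ β - 1) / β) := by
    have h := hFTC ▸ (hIle.trans_eq hIcalc)
    calc φ (lam * x) - φ lam ≤ C * (((lam * x) ^ β - lam ^ β) / β) := h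
      _ = σ * (lam * deriv φ lam) * ((x ^ β - 1) / β) := by
          rw [hC, hmulβ]
          linear_combination (σ * deriv φ lam * (x ^ β - 1) / β) * hlamβ
  have hA : lam * deriv φ lam ≤ φ lam := key1 lam hl
  have hA0 : 0 ≤ lam * deriv φ lam :=
    mul_nonneg hl.le (hderiv_nonneg lam hl)
  have hφl : 0 ≤ φ lam := hnn lam hl
  have hq : 0 ≤ (x ^ β - 1) / β := div_nonneg (by linarith) hβ.le
  have s1 : σ * (lam * deriv φ lam) * ((x ^ β - 1) / β) ≤
      σ * φ lam * ((x ^ β - 1) / β) :=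
    mul_le_mul_of_nonneg_right (mul_le_mul_of_nonneg_left hA hσ.le) hq
  have s2 : σ * φ lam * ((x ^ β - 1) / β) ≤ σ / β * φ lam * x ^ β := by
    have e : σ * φ lam * ((x ^ β - 1) / β) = σ / β * φ lam * (x ^ β - 1) := by ring
    rw [e]
    apply mul_le_mul_of_nonneg_left (by linarith) (by positivity)
  have s3 : φ lam ≤ φ lam * x ^ β := le_mul_of_one_le_right hφl hxβ
  rcases eq_or_lt_of_le hφl with hz | hz
  · rw [← hz, div_zero]
    positivity
  · rw [div_le_iff₀ hz]
    have e : (1 + σ / β) * x ^ β * φ lam = φ lam * x ^ β + σ / β * φ lam * x ^ β := by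
      ring
    linarith [hmain, s1, s2, s3, e.ge, e.le]
end

section
/- Let γ > 0, r₀ > 0, and let h : (0, r₀] → ℝ be a function such that lim_{r→0+} r^{−γ} sup{ |h(t) − h(r)| : r ≤ t ≤ min(2r, r₀) } = 0. Then the limit L := lim_{r→0+} h(r) exists and is finite, and moreover lim_{r→0+} r^{−γ} |L − h(r)| = 0. -/
open Set Filter Topology

/-!
Summing the oscillation bounds along the dyadic scales `r, r/2, r/4, …` gives a geometric series
with ratio `2^{-γ} < 1`, so `|h s - h r| ≤ ε r^γ / (1 - 2^{-γ})` for all small `s ≤ r`. This is a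
Cauchy condition at `0⁺`, and letting `s → 0⁺` in the same bound gives the rate of convergence.
-/

variable {E : Type*} [SeminormedAddCommGroup E] {f : ℝ → E} {γ : ℝ}

theorem norm_sub_le_of_dyadic_oscillation_le {c ρ : ℝ} (hγ : 0 < γ) (hc : 0 ≤ c)
    (hf : ∀ r t, 0 < r → r ≤ t → t ≤ 2 * r → t < ρ → ‖f t - f r‖ ≤ c * r ^ γ)
    {s r : ℝ} (hs : 0 < s) (hsr : s ≤ r) (hr : r < ρ) :
    ‖f s - f r‖ ≤ c / (1 - (2 ^ γ)⁻¹) * r ^ γ := by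
  set q : ℝ := (2 ^ γ)⁻¹
  have hq0 : 0 ≤ q := inv_nonneg.2 (Real.rpow_nonneg zero_le_two γ)
  have hq1 : q < 1 := inv_lt_one_of_one_lt₀ (Real.one_lt_rpow one_lt_two hγ)
  set M := c / (1 - q)
  have hMq : M * (1 - q) = c := div_mul_cancel₀ c (by linarith)
  have hM : c ≤ M := le_div_self hc (by linarith) (by linarith)
  obtain ⟨n, hn⟩ := pow_unbounded_of_one_lt (r / s) one_lt_two
  replace hn : r ≤ 2 ^ n * s := ((div_lt_iff₀ hs).1 hn).le
  induction n generalizing s r with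
  | zero =>
    rw [le_antisymm hsr (by simpa using hn), sub_self, norm_zero]
    exact mul_nonneg (hc.trans hM) (Real.rpow_nonneg (hs.trans_le hsr).le γ)
  | succ n ih =>
    rcases le_or_gt r (2 * s) with hr2s | hsr2
    · rw [norm_sub_rev]
      calc ‖f r - f s‖ ≤ c * s ^ γ := hf s r hs hsr hr2s hr
        _ ≤ M * r ^ γ :=
          mul_le_mul hM (Real.rpow_le_rpow hs.le hsr hγ.le) (Real.rpow_nonneg hs.le γ)
            (hc.trans hM)
    · have hhalf : (r / 2) ^ γ = q * r ^ γ := by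
        rw [Real.div_rpow (by linarith) zero_le_two, div_eq_inv_mul]
      have hnear : ‖f r - f (r / 2)‖ ≤ c * (r / 2) ^ γ :=
        hf (r / 2) r (by linarith) (by linarith) (by linarith) hr
      have hfar : ‖f s - f (r / 2)‖ ≤ M * (r / 2) ^ γ :=
        ih hs (by linarith) (by linarith) (by rw [pow_succ] at hn; linarith)
      calc ‖f s - f r‖ ≤ ‖f s - f (r / 2)‖ + ‖f r - f (r / 2)‖ := by
            rw [norm_sub_rev (f r)]; exact norm_sub_le_norm_sub_add_norm_sub ..
        _ ≤ (M + c) * q * r ^ γ := by rw [hhalf] at hnear hfar; linarith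
        _ ≤ M * r ^ γ :=
          mul_le_mul_of_nonneg_right (by nlinarith) (Real.rpow_nonneg (by linarith) γ)

section UniformEstimate

variable (hf : ∀ ε > 0, ∃ ρ > 0, ∀ s r, 0 < s → s ≤ r → r < ρ → ‖f s - f r‖ ≤ ε * r ^ γ)
include hf

theorem cauchy_map_nhdsGT_zero_of_norm_sub_le_rpow (hγ : 0 ≤ γ) : Cauchy (map f (𝓝[>] 0)) := by
  refine Metric.cauchy_iff.2 ⟨map_neBot, fun δ hδ => ?_⟩
  obtain ⟨ρ, hρ, hρf⟩ := hf (δ / 2) (half_pos hδ)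
  have hsmall : ∀ a b, a ∈ Ioo 0 (min ρ 1) → b ∈ Ioo 0 (min ρ 1) → a ≤ b → ‖f a - f b‖ < δ :=
    fun a b ha hb hab =>
      calc ‖f a - f b‖ ≤ δ / 2 * b ^ γ := hρf a b ha.1 hab (hb.2.trans_le (min_le_left _ _))
        _ ≤ δ / 2 * 1 := by
          gcongr
          exact Real.rpow_le_one hb.1.le (hb.2.trans_le (min_le_right _ _)).le hγ
        _ < δ := by linarith
  refine ⟨f '' Ioo 0 (min ρ 1), image_mem_map (Ioo_mem_nhdsGT (lt_min hρ one_pos)), ?_⟩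
  rintro _ ⟨a, ha, rfl⟩ _ ⟨b, hb, rfl⟩
  rw [dist_eq_norm]
  rcases le_total a b with hab | hba
  · exact hsmall a b ha hb hab
  · rw [norm_sub_rev]; exact hsmall b a hb ha hba

theorem tendsto_rpow_neg_mul_norm_sub_of_norm_sub_le_rpow {L : E}
    (hL : Tendsto f (𝓝[>] 0) (𝓝 L)) :
    Tendsto (fun r => r ^ (-γ) * ‖L - f r‖) (𝓝[>] 0) (𝓝 0) := by
  refine Metric.tendsto_nhds.2 fun ε hε => ?_
  obtain ⟨ρ, hρ, hρf⟩ := hf (ε / 2) (half_pos hε)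
  filter_upwards [Ioo_mem_nhdsGT hρ] with r hr
  have hLr : ‖L - f r‖ ≤ ε / 2 * r ^ γ :=
    le_of_tendsto (hL.sub_const (f r)).norm <| by
      filter_upwards [Ioc_mem_nhdsGT hr.1] with s hs using hρf s r hs.1 hs.2 hr.2
  have hrγ : 0 < r ^ γ := Real.rpow_pos_of_pos hr.1 γ
  rw [Real.dist_0_eq_abs, abs_of_nonneg (mul_nonneg (Real.rpow_nonneg hr.1.le _) (norm_nonneg _)),
    Real.rpow_neg hr.1.le]
  calc (r ^ γ)⁻¹ * ‖L - f r‖ ≤ (r ^ γ)⁻¹ * (ε / 2 * r ^ γ) := by gcongr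
    _ = ε / 2 := by field_simp
    _ < ε := half_lt_self hε

end UniformEstimate

/-- The real-variable convergence lemma from the proof of Lemma 3.5 of Kang–Kim: if
`h : (0,r₀] → ℝ` satisfies `lim_{r→0+} r^{-γ} sup{|h(t)-h(r)| : r ≤ t ≤ min(2r,r₀)} = 0`,
then `L = lim_{r→0+} h(r)` exists, is finite, and `lim_{r→0+} r^{-γ} |L - h(r)| = 0`. -/
theorem limit_exists_of_dyadic_oscillation (γ r₀ : ℝ) (hγ : 0 < γ) (hr₀ : 0 < r₀)
    (h : ℝ → ℝ)
    (hosc : ∀ ε : ℝ, 0 < ε → ∃ ρ : ℝ, 0 < ρ ∧ ∀ r : ℝ, 0 < r → r < ρ →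
      ∀ t : ℝ, r ≤ t → t ≤ min (2 * r) r₀ → |h t - h r| ≤ ε * r ^ γ) :
    ∃ L : ℝ,
      Filter.Tendsto h (nhdsWithin 0 (Set.Ioi 0)) (nhds L) ∧
      Filter.Tendsto (fun r : ℝ => r ^ (-γ) * |L - h r|)
        (nhdsWithin 0 (Set.Ioi 0)) (nhds 0) := by
  have hq : 0 < 1 - ((2 : ℝ) ^ γ)⁻¹ :=
    sub_pos.2 (inv_lt_one_of_one_lt₀ (Real.one_lt_rpow one_lt_two hγ))
  have huniform : ∀ ε > 0, ∃ ρ > 0, ∀ s r, 0 < s → s ≤ r → r < ρ → ‖h s - h r‖ ≤ ε * r ^ γ := by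
    intro ε hε
    obtain ⟨ρ, hρ, hρh⟩ := hosc (ε * (1 - (2 ^ γ)⁻¹)) (by positivity)
    refine ⟨min ρ r₀, lt_min hρ hr₀, fun s r hs hsr hr => ?_⟩
    have hdyadic := norm_sub_le_of_dyadic_oscillation_le hγ (by positivity) (f := h)
      (fun r t hr hrt ht2r htρ => hρh r hr ((hrt.trans_lt htρ).trans_le (min_le_left _ _)) t
        hrt (le_min ht2r (htρ.trans_le (min_le_right _ _)).le)) hs hsr hr
    rwa [mul_div_cancel_right₀ _ hq.ne'] at hdyadic
  obtain ⟨L, hL⟩ := cauchy_map_iff_exists_tendsto.1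
    (cauchy_map_nhdsGT_zero_of_norm_sub_le_rpow huniform hγ.le)
  exact ⟨L, hL, by
    simpa only [Real.norm_eq_abs] using
      tendsto_rpow_neg_mul_norm_sub_of_norm_sub_le_rpow huniform hL⟩
end

section
/- Let d ≥ 2 and let φ be a complete Bernstein function satisfying the standing assumptions (A-1)–(A-6). Then there exists a constant c > 0 such that for all 0 < s ≤ t ≤ 2, φ'(t^{−2}) / (φ(t^{−2}) t^{d+2}) ≤ c φ'(s^{−2}) / (φ(s^{−2}) s^{d+2}). -/
open Set Filter Metric MeasureTheory ENNReal

/-- A completely monotone function on `(0,∞)`: `(-1)^n χ^(n) ≥ 0` for all `n ≥ 0`. -/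
def CompletelyMonotone (χ : ℝ → ℝ) : Prop :=
  ContDiffOn ℝ (⊤ : ℕ∞) χ (Set.Ioi 0) ∧
  ∀ n : ℕ, ∀ x : ℝ, 0 < x → 0 ≤ (-1 : ℝ) ^ n * iteratedDeriv n χ x

/-- The standing assumptions (A-1)–(A-6) of Kang–Kim on a Bernstein function `φ`,
in dimension `d`, with the constants `σ, λ₀, δ` of (A-3). -/
structure StandingAssumptions (d : ℕ) (φ : ℝ → ℝ) (σ lam₀ δ : ℝ) : Prop where
  bernstein : IsBernstein φ
  /-- (A-1): `φ` is a complete Bernstein function. -/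
  A1 : ∃ b : ℝ, 0 ≤ b ∧ ∃ χ : ℝ → ℝ, CompletelyMonotone χ ∧
      (∫⁻ t in Set.Ioi (0 : ℝ), ENNReal.ofReal (min 1 t * χ t)) < ⊤ ∧
      ∀ lam : ℝ, 0 < lam →
        φ lam = b * lam + ∫ t in Set.Ioi (0 : ℝ), (1 - Real.exp (-(lam * t))) * χ t
  /-- (A-2): `φ(0+) = 0` and `φ(λ) → ∞` as `λ → ∞`. -/
  A2a : Filter.Tendsto φ (nhdsWithin 0 (Set.Ioi 0)) (nhds 0)
  A2b : Filter.Tendsto φ Filter.atTop Filter.atTop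
  /-- (A-3). -/
  hσ : 0 < σ
  hlam₀ : 0 < lam₀
  hδ0 : 0 < δ
  hδ1 : δ ≤ 1
  A3 : ∀ t : ℝ, 1 ≤ t → ∀ lam : ℝ, lam₀ ≤ lam →
      deriv φ (lam * t) / deriv φ lam ≤ σ * t ^ (-δ)
  /-- (A-4): lower scaling of `φ'` when `d = 2`. -/
  A4 : d = 2 → ∃ σ₀ : ℝ, 0 < σ₀ ∧ ∃ δ₀ : ℝ, 0 < δ₀ ∧ δ₀ < 2 * δ ∧
      ∀ t : ℝ, 1 ≤ t → ∀ lam : ℝ, lam₀ ≤ lam →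
        σ₀ * t ^ (-δ₀) ≤ deriv φ (lam * t) / deriv φ lam
  /-- (A-5): lower scaling of `φ` when `δ ≤ 1/2`. -/
  A5 : δ ≤ 1/2 → ∃ σ₁ : ℝ, 0 < σ₁ ∧ ∃ δ₁ : ℝ, δ ≤ δ₁ ∧ δ₁ < 1 ∧
      ∀ t : ℝ, 1 ≤ t → ∀ lam : ℝ, lam₀ ≤ lam →
        σ₁ * t ^ (1 - δ₁) ≤ φ (lam * t) / φ lam
  /-- (A-6): transience. -/
  A6 : ∃ θ : ℝ, 0 < θ ∧
      (∫⁻ lam in Set.Ioo (0 : ℝ) θ, ENNReal.ofReal (lam ^ ((d : ℝ)/2 - 1) / φ lam)) < ⊤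

/-- The first `d-1` coordinates of a point of `ℝ^d`. -/
noncomputable def tildeCoord (d : ℕ) (y : EuclideanSpace ℝ (Fin d)) :
    EuclideanSpace ℝ (Fin (d - 1)) :=
  WithLp.toLp 2 (fun i : Fin (d - 1) => y (Fin.castLE (Nat.sub_le d 1) i))

/-- The last coordinate of a point of `ℝ^d` (`d ≥ 1`). -/
noncomputable def lastCoord (d : ℕ) (hd : 0 < d) (y : EuclideanSpace ℝ (Fin d)) : ℝ :=
  y ⟨d - 1, Nat.sub_lt hd Nat.one_pos⟩

/-- `D` is a Lipschitz open set with characteristics `(R_Lip, Λ_Lip)`: near each boundary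
point `ξ` there is an orthonormal coordinate system (given by a linear isometry `A` applied
to `x - ξ`) in which `D ∩ B(ξ, R_Lip)` is the region above the graph of a `Λ_Lip`-Lipschitz
function `ψ` with `ψ(0) = 0`. -/
def IsLipschitzOpenSet (d : ℕ) (hd : 0 < d) (D : Set (EuclideanSpace ℝ (Fin d)))
    (RLip ΛLip : ℝ) : Prop :=
  IsOpen D ∧ 0 < RLip ∧ 0 < ΛLip ∧
  ∀ ξ ∈ frontier D,
    ∃ (A : EuclideanSpace ℝ (Fin d) ≃ₗᵢ[ℝ] EuclideanSpace ℝ (Fin d))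
      (ψ : EuclideanSpace ℝ (Fin (d - 1)) → ℝ),
      ψ 0 = 0 ∧
      (∀ u v, |ψ u - ψ v| ≤ ΛLip * ‖u - v‖) ∧
      (∀ x ∈ Metric.ball ξ RLip,
        x ∈ D ↔ ψ (tildeCoord d (A (x - ξ))) < lastCoord d hd (A (x - ξ)))

/-- `g ∈ Λ^p_β(ℝ^d)`: `g ∈ L^p` and `‖g(·+y) - g‖_p ≤ c |y|^β` for all `y`. -/
def MemHolderLp {d : ℕ} (p : ℝ≥0∞) (β : ℝ)
    (g : EuclideanSpace ℝ (Fin d) → ℝ) : Prop :=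
  MeasureTheory.MemLp g p volume ∧
  ∃ c : ℝ, 0 < c ∧ ∀ y : EuclideanSpace ℝ (Fin d),
    MeasureTheory.eLpNorm (fun x => g (x + y) - g x) p volume ≤ ENNReal.ofReal (c * ‖y‖ ^ β)

/-- `f ∈ Λ^p_{β,loc}(D̄^c)`: near every boundary point of `D`, `f` agrees on `D̄^c`
with some function of `Λ^p_β(ℝ^d)`. -/
def MemHolderLpLoc {d : ℕ} (p : ℝ≥0∞) (β : ℝ) (D : Set (EuclideanSpace ℝ (Fin d)))
    (f : EuclideanSpace ℝ (Fin d) → ℝ) : Prop :=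
  ∀ ξ ∈ frontier D, ∃ η : ℝ, 0 < η ∧ ∃ g : EuclideanSpace ℝ (Fin d) → ℝ,
    MemHolderLp p β g ∧ ∀ x ∈ (closure D)ᶜ ∩ Metric.ball ξ η, f x = g x


section aux
variable {φ : ℝ → ℝ}

lemma aux_diffAt (hsm : ContDiffOn ℝ (⊤ : ℕ∞) φ (Set.Ioi 0)) {x : ℝ} (hx : 0 < x) :
    DifferentiableAt ℝ φ x :=
  (hsm.differentiableOn (by simp)).differentiableAt (Ioi_mem_nhds hx)

lemma aux_contDeriv (hsm : ContDiffOn ℝ (⊤ : ℕ∞) φ (Set.Ioi 0)) :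
    ContinuousOn (deriv φ) (Set.Ioi 0) :=
  hsm.continuousOn_deriv_of_isOpen isOpen_Ioi (by simp)

lemma aux_antitone (hsm : ContDiffOn ℝ (⊤ : ℕ∞) φ (Set.Ioi 0))
    (hsign : ∀ x : ℝ, 0 < x → deriv (deriv φ) x ≤ 0) :
    AntitoneOn (deriv φ) (Set.Ioi 0) := by
  refine antitoneOn_of_deriv_nonpos (convex_Ioi 0) (aux_contDeriv hsm) ?_ ?_
  · rw [interior_Ioi]
    exact (hsm.deriv_of_isOpen isOpen_Ioi (show ((1:WithTop ℕ∞)) + 1 ≤ ((⊤ : ℕ∞) : WithTop ℕ∞) from WithTop.coe_le_coe.2 le_top)).differentiableOn one_ne_zero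
  · rw [interior_Ioi]; exact fun x hx => hsign x hx

lemma aux_mvt (hsm : ContDiffOn ℝ (⊤ : ℕ∞) φ (Set.Ioi 0)) {x y : ℝ} (hx : 0 < x) (hxy : x < y) :
    ∃ c ∈ Set.Ioo x y, deriv φ c = (φ y - φ x) / (y - x) := by
  refine exists_hasDerivAt_eq_slope φ (deriv φ) hxy ?_ ?_
  · intro z hz
    exact ((aux_diffAt hsm (lt_of_lt_of_le hx hz.1)).continuousAt).continuousWithinAt
  · intro z hz
    exact (aux_diffAt hsm (lt_trans hx hz.1)).hasDerivAt

/-- Two-sided slope bounds from antitone derivative. -/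
lemma aux_slope (hsm : ContDiffOn ℝ (⊤ : ℕ∞) φ (Set.Ioi 0))
    (hanti : AntitoneOn (deriv φ) (Set.Ioi 0)) {x y : ℝ} (hx : 0 < x) (hxy : x < y) :
    (y - x) * deriv φ y ≤ φ y - φ x ∧ φ y - φ x ≤ (y - x) * deriv φ x := by
  obtain ⟨c, hc, hceq⟩ := aux_mvt hsm hx hxy
  have hy0 : (0:ℝ) < y - x := by linarith [hc.1, hc.2]
  have hc0 : 0 < c := lt_trans hx hc.1
  have h1 : deriv φ y ≤ deriv φ c := hanti (mem_Ioi.2 hc0) (mem_Ioi.2 (lt_trans hx hxy)) hc.2.le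
  have h2 : deriv φ c ≤ deriv φ x := hanti (mem_Ioi.2 hx) (mem_Ioi.2 hc0) hc.1.le
  have : φ y - φ x = (y - x) * deriv φ c := by
    field_simp at hceq; linarith [hceq]
  constructor <;> nlinarith

end aux

section aux2
variable {φ : ℝ → ℝ}

lemma aux_d1 (hb : IsBernstein φ) {x : ℝ} (hx : 0 < x) : 0 ≤ deriv φ x := by
  have := hb.2.2 1 le_rfl x hx
  simpa [iteratedDeriv_one] using this

lemma aux_d2 (hb : IsBernstein φ) {x : ℝ} (hx : 0 < x) : deriv (deriv φ) x ≤ 0 := by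
  have := hb.2.2 2 (by norm_num) x hx
  rw [show (2:ℕ) = 1 + 1 from rfl, iteratedDeriv_succ, iteratedDeriv_one] at this
  simpa using this

lemma aux_anti (hb : IsBernstein φ) : AntitoneOn (deriv φ) (Set.Ioi 0) :=
  aux_antitone hb.1 (fun x hx => aux_d2 hb hx)

lemma aux_mono (hb : IsBernstein φ) {x y : ℝ} (hx : 0 < x) (hxy : x ≤ y) : φ x ≤ φ y := by
  rcases eq_or_lt_of_le hxy with rfl | h
  · exact le_rfl
  · have := (aux_slope hb.1 (aux_anti hb) hx h).1
    nlinarith [aux_d1 hb (lt_trans hx h)]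

/-- positivity of `deriv φ` from unboundedness. -/
lemma aux_d_pos (hb : IsBernstein φ) (h2b : Tendsto φ atTop atTop) {x : ℝ} (hx : 0 < x) :
    0 < deriv φ x := by
  rcases lt_or_eq_of_le (aux_d1 hb hx) with h | h
  · exact h
  exfalso
  have hconst : ∀ y : ℝ, x ≤ y → φ y ≤ φ x := by
    intro y hy
    rcases eq_or_lt_of_le hy with rfl | hlt
    · exact le_rfl
    have hs := (aux_slope hb.1 (aux_anti hb) hx hlt).1
    obtain ⟨c, hc, hceq⟩ := aux_mvt hb.1 hx hlt
    have hc0 : 0 < c := lt_trans hx hc.1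
    have hdc : deriv φ c ≤ 0 := by
      have h2 := aux_anti hb (mem_Ioi.2 hx) (mem_Ioi.2 hc0) hc.1.le
      rw [← h] at h2; exact h2
    have hne : y - x ≠ 0 := sub_ne_zero.mpr (ne_of_gt hlt)
    have hmul := (eq_div_iff hne).1 hceq
    have hprod : deriv φ c * (y - x) ≤ 0 :=
      mul_nonpos_of_nonpos_of_nonneg hdc (by linarith : (0:ℝ) ≤ y - x)
    linarith
  obtain ⟨y, hy1, hy2⟩ := ((h2b.eventually_gt_atTop (φ x)).and (eventually_ge_atTop x)).exists
  exact absurd (hconst y hy2) (not_le.2 hy1)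

lemma aux_pos (hb : IsBernstein φ) (h2b : Tendsto φ atTop atTop) {x : ℝ} (hx : 0 < x) :
    0 < φ x := by
  rcases lt_or_eq_of_le (hb.2.1 x hx) with h | h
  · exact h
  exfalso
  have h2 : (0:ℝ) < x/2 := by linarith
  have hs := (aux_slope hb.1 (aux_anti hb) h2 (by linarith : x/2 < x)).1
  have hle : φ (x/2) ≤ φ x := aux_mono hb h2 (by linarith)
  have hge : 0 ≤ φ (x/2) := hb.2.1 _ h2
  nlinarith [aux_d_pos hb h2b hx]

lemma aux_d_le (hb : IsBernstein φ) {x : ℝ} (hx : 0 < x) :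
    x * deriv φ x ≤ 2 * φ x := by
  have h2 : (0:ℝ) < x/2 := by linarith
  have hs := (aux_slope hb.1 (aux_anti hb) h2 (by linarith : x/2 < x)).1
  have hge : 0 ≤ φ (x/2) := hb.2.1 _ h2
  nlinarith

end aux2

section cbf
variable {χ : ℝ → ℝ}

lemma cm_nonneg (hχ : CompletelyMonotone χ) {t : ℝ} (ht : 0 < t) : 0 ≤ χ t := by
  have := hχ.2 0 t ht
  simpa [iteratedDeriv_zero] using this

lemma cm_anti (hχ : CompletelyMonotone χ) : AntitoneOn χ (Set.Ioi 0) := by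
  refine antitoneOn_of_deriv_nonpos (convex_Ioi 0) (hχ.1.continuousOn) ?_ ?_
  · rw [interior_Ioi]; exact hχ.1.differentiableOn (by simp)
  · rw [interior_Ioi]
    intro x hx
    have := hχ.2 1 x hx
    simpa [iteratedDeriv_one] using this

lemma cm_base_int (hχ : CompletelyMonotone χ)
    (hfin : (∫⁻ t in Set.Ioi (0 : ℝ), ENNReal.ofReal (min 1 t * χ t)) < ⊤) :
    IntegrableOn (fun t => min 1 t * χ t) (Set.Ioi 0) := by
  have hmem := ae_restrict_mem (μ := (volume : Measure ℝ)) (measurableSet_Ioi (a := (0:ℝ)))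
  refine ⟨((continuous_const.min continuous_id).continuousOn.mul
    hχ.1.continuousOn).aestronglyMeasurable measurableSet_Ioi, ?_⟩
  rw [hasFiniteIntegral_iff_norm]
  have heq : ∀ᵐ t ∂(volume.restrict (Set.Ioi 0)),
      ENNReal.ofReal ‖min 1 t * χ t‖ = ENNReal.ofReal (min 1 t * χ t) := by
    refine hmem.mono fun t ht => ?_
    rw [Real.norm_eq_abs, abs_of_nonneg]
    exact mul_nonneg (le_min (by norm_num) (le_of_lt ht)) (cm_nonneg hχ ht)
  rw [lintegral_congr_ae heq]
  exact hfin

lemma exp_diff_le {c t : ℝ} (hc : 0 < c) (ht : 0 < t) :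
    1 - Real.exp (-(c*t)) ≤ (1 + c) * min 1 t := by
  rcases le_total t 1 with h | h
  · rw [min_eq_right h]
    have := Real.add_one_le_exp (-(c*t))
    nlinarith
  · rw [min_eq_left h]
    have := Real.exp_nonneg (-(c*t))
    nlinarith

lemma cm_int1 (hχ : CompletelyMonotone χ)
    (hfin : (∫⁻ t in Set.Ioi (0 : ℝ), ENNReal.ofReal (min 1 t * χ t)) < ⊤)
    {c : ℝ} (hc : 0 < c) :
    IntegrableOn (fun t => (1 - Real.exp (-(c*t))) * χ t) (Set.Ioi 0) := by
  have hmem := ae_restrict_mem (μ := (volume : Measure ℝ)) (measurableSet_Ioi (a := (0:ℝ)))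
  refine ((cm_base_int hχ hfin).const_mul (1 + c)).mono' ?_ ?_
  · exact ((by continuity : Continuous fun t : ℝ => 1 - Real.exp (-(c*t))).continuousOn.mul
      hχ.1.continuousOn).aestronglyMeasurable measurableSet_Ioi
  · refine hmem.mono fun t ht => ?_
    have ht0 : (0:ℝ) < t := ht
    have h1 : 0 ≤ 1 - Real.exp (-(c*t)) := by
      have : Real.exp (-(c*t)) ≤ 1 := Real.exp_le_one_iff.2 (by nlinarith)
      linarith
    have hχ0 := cm_nonneg hχ ht0
    rw [Real.norm_eq_abs, abs_of_nonneg (mul_nonneg h1 hχ0)]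
    calc (1 - Real.exp (-(c*t))) * χ t ≤ ((1 + c) * min 1 t) * χ t :=
          mul_le_mul_of_nonneg_right (exp_diff_le hc ht0) hχ0
      _ = (1 + c) * (min 1 t * χ t) := mul_assoc _ _ _

/-- The integrand of the increment `φ(2r) - φ(r)`. -/
lemma cm_int2 (hχ : CompletelyMonotone χ)
    (hfin : (∫⁻ t in Set.Ioi (0 : ℝ), ENNReal.ofReal (min 1 t * χ t)) < ⊤)
    {c : ℝ} (hc : 0 < c) :
    IntegrableOn (fun t => (Real.exp (-(c*t)) - Real.exp (-(2*c*t))) * χ t) (Set.Ioi 0) := by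
  have hmem := ae_restrict_mem (μ := (volume : Measure ℝ)) (measurableSet_Ioi (a := (0:ℝ)))
  refine (cm_int1 hχ hfin hc).mono' ?_ ?_
  · exact ((by continuity :
        Continuous fun t : ℝ => Real.exp (-(c*t)) - Real.exp (-(2*c*t))).continuousOn.mul
      hχ.1.continuousOn).aestronglyMeasurable measurableSet_Ioi
  · refine hmem.mono fun t ht => ?_
    have ht0 : (0:ℝ) < t := ht
    have hχ0 := cm_nonneg hχ ht0
    have h2 : Real.exp (-(2*c*t)) ≤ Real.exp (-(c*t)) := Real.exp_le_exp.2 (by nlinarith)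
    have h3 : Real.exp (-(c*t)) ≤ 1 := Real.exp_le_one_iff.2 (by nlinarith)
    have h4 : 0 ≤ Real.exp (-(2*c*t)) := Real.exp_nonneg _
    have h5 : Real.exp (-(c*t)) * Real.exp (-(c*t)) = Real.exp (-(2*c*t)) := by
      rw [← Real.exp_add]; ring_nf
    rw [Real.norm_eq_abs, abs_of_nonneg (mul_nonneg (by linarith) hχ0)]
    refine mul_le_mul_of_nonneg_right ?_ hχ0
    nlinarith [sq_nonneg (1 - Real.exp (-(c*t)))]

end cbf

section rep
variable {φ χ : ℝ → ℝ} {b : ℝ}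

lemma rep_diff (hχ : CompletelyMonotone χ)
    (hfin : (∫⁻ t in Set.Ioi (0 : ℝ), ENNReal.ofReal (min 1 t * χ t)) < ⊤)
    (hrep : ∀ lam : ℝ, 0 < lam →
      φ lam = b * lam + ∫ t in Set.Ioi (0:ℝ), (1 - Real.exp (-(lam*t))) * χ t)
    {r : ℝ} (hr : 0 < r) :
    φ (2*r) - φ r
      = b*r + ∫ t in Set.Ioi (0:ℝ), (Real.exp (-(r*t)) - Real.exp (-(2*r*t))) * χ t := by
  have h1 := cm_int1 hχ hfin hr
  have h2 := cm_int1 hχ hfin (show 0 < 2*r by linarith)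
  have h3 : (∫ t in Set.Ioi (0:ℝ), (Real.exp (-(r*t)) - Real.exp (-(2*r*t))) * χ t)
      = (∫ t in Set.Ioi (0:ℝ), (1 - Real.exp (-(2*r*t))) * χ t)
        - ∫ t in Set.Ioi (0:ℝ), (1 - Real.exp (-(r*t))) * χ t := by
    rw [← integral_sub h2 h1]
    exact integral_congr_ae (ae_of_all _ fun t => by ring)
  rw [hrep r hr, hrep (2*r) (by linarith), h3]
  ring

lemma K_mono (hχ : CompletelyMonotone χ)
    (hfin : (∫⁻ t in Set.Ioi (0 : ℝ), ENNReal.ofReal (min 1 t * χ t)) < ⊤)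
    {r R : ℝ} (hr : 0 < r) (hrR : r ≤ R) :
    (∫ t in Set.Ioi (0:ℝ), (Real.exp (-(r*t)) - Real.exp (-(2*r*t))) * χ t)
      ≤ (R/r) * ∫ t in Set.Ioi (0:ℝ), (Real.exp (-(R*t)) - Real.exp (-(2*R*t))) * χ t := by
  have hR : 0 < R := lt_of_lt_of_le hr hrR
  set k := R / r with hk
  have hk0 : 0 < k := div_pos hR hr
  have hk1 : 1 ≤ k := (one_le_div hr).2 hrR
  have hrk : r * k = R := by rw [hk]; field_simp
  have hid := integral_comp_mul_left_Ioi
      (fun t => (Real.exp (-(r*t)) - Real.exp (-(2*r*t))) * χ t) 0 hk0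
  rw [mul_zero] at hid
  have hmono : (∫ x in Set.Ioi (0:ℝ),
      (Real.exp (-(r*(k*x))) - Real.exp (-(2*r*(k*x)))) * χ (k*x))
      ≤ ∫ t in Set.Ioi (0:ℝ), (Real.exp (-(R*t)) - Real.exp (-(2*R*t))) * χ t := by
    have hmem := ae_restrict_mem (μ := (volume : Measure ℝ)) (measurableSet_Ioi (a := (0:ℝ)))
    refine integral_mono_of_nonneg (hmem.mono fun x hx => ?_) (cm_int2 hχ hfin hR)
      (hmem.mono fun x hx => ?_)
    · have hx0 : (0:ℝ) < x := hx
      have e1 : r*(k*x) = R*x := by rw [← hrk]; ring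
      have e2 : 2*r*(k*x) = 2*R*x := by rw [← hrk]; ring
      simp only [Pi.zero_apply]
      rw [e1, e2]
      have : Real.exp (-(2*R*x)) ≤ Real.exp (-(R*x)) := Real.exp_le_exp.2 (by nlinarith)
      exact mul_nonneg (by linarith) (cm_nonneg hχ (by nlinarith))
    · have hx0 : (0:ℝ) < x := hx
      have e1 : r*(k*x) = R*x := by rw [← hrk]; ring
      have e2 : 2*r*(k*x) = 2*R*x := by rw [← hrk]; ring
      dsimp only
      rw [e1, e2]
      have hxle : x ≤ k*x := by nlinarith
      have hkx0 : 0 < k*x := by nlinarith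
      have hχle : χ (k*x) ≤ χ x := cm_anti hχ (Set.mem_Ioi.2 hx0) (Set.mem_Ioi.2 hkx0) hxle
      have : Real.exp (-(2*R*x)) ≤ Real.exp (-(R*x)) := Real.exp_le_exp.2 (by nlinarith)
      exact mul_le_mul_of_nonneg_left hχle (by linarith)
  have hed : (∫ t in Set.Ioi (0:ℝ), (Real.exp (-(r*t)) - Real.exp (-(2*r*t))) * χ t)
      = k * ∫ x in Set.Ioi (0:ℝ),
          (Real.exp (-(r*(k*x))) - Real.exp (-(2*r*(k*x)))) * χ (k*x) := by
    rw [hid, smul_eq_mul]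
    rw [← mul_assoc, mul_inv_cancel₀ hk0.ne', one_mul]
  rw [hed]
  exact mul_le_mul_of_nonneg_left hmono hk0.le

end rep


section scaling
variable {φ : ℝ → ℝ}

lemma deriv_scale (hb : IsBernstein φ)
    (hA1 : ∃ b : ℝ, 0 ≤ b ∧ ∃ χ : ℝ → ℝ, CompletelyMonotone χ ∧
      (∫⁻ t in Set.Ioi (0 : ℝ), ENNReal.ofReal (min 1 t * χ t)) < ⊤ ∧
      ∀ lam : ℝ, 0 < lam →
        φ lam = b * lam + ∫ t in Set.Ioi (0:ℝ), (1 - Real.exp (-(lam * t))) * χ t)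
    {μ lam : ℝ} (hμ : 0 < μ) (hml : μ ≤ lam) :
    μ^2 * deriv φ μ ≤ 4 * (lam^2 * deriv φ lam) := by
  obtain ⟨b, hb0, χ, hχ, hfin, hrep⟩ := hA1
  have hl : 0 < lam := lt_of_lt_of_le hμ hml
  have hμ2 : 0 < μ/2 := by linarith
  have hs1 := (aux_slope hb.1 (aux_anti hb) hμ2 (by linarith : μ/2 < μ)).1
  have hd1 := rep_diff hχ hfin hrep hμ2
  have hKm := K_mono hχ hfin hμ2 (by linarith : μ/2 ≤ lam)
  have hd2 := rep_diff hχ hfin hrep hl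
  have hs2 := (aux_slope hb.1 (aux_anti hb) hl (by linarith : lam < 2*lam)).2
  set Kr := ∫ t in Set.Ioi (0:ℝ), (Real.exp (-((μ/2)*t)) - Real.exp (-(2*(μ/2)*t))) * χ t with hKrd
  set KR := ∫ t in Set.Ioi (0:ℝ), (Real.exp (-(lam*t)) - Real.exp (-(2*lam*t))) * χ t with hKRd
  rw [show 2*(μ/2) = μ by ring] at hd1
  have hKRle : KR ≤ lam * deriv φ lam - b*lam := by nlinarith [hd2, hs2]
  have h9 : lam/(μ/2)*μ = 2*lam := by
    field_simp
  have hKrle : μ * Kr ≤ 2*lam*KR := by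
    have h := mul_le_mul_of_nonneg_left hKm hμ.le
    calc μ * Kr ≤ μ * ((lam/(μ/2)) * KR) := h
      _ = (lam/(μ/2)*μ) * KR := by ring
      _ = 2*lam*KR := by rw [h9]
  have h5 : μ*((μ - μ/2) * deriv φ μ) ≤ μ*(b*(μ/2) + Kr) := by
    apply mul_le_mul_of_nonneg_left _ hμ.le
    rw [← hd1]; exact hs1
  have h6 : 2*lam*KR ≤ 2*lam*(lam*deriv φ lam - b*lam) :=
    mul_le_mul_of_nonneg_left hKRle (by linarith)
  have h7 : b*(μ*μ) ≤ b*(2*lam*(2*lam)) :=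
    mul_le_mul_of_nonneg_left (by nlinarith) hb0
  nlinarith [h5, h6, h7, hKrle]

lemma phi_upper (hb : IsBernstein φ) {σ lam₀ δ' : ℝ} (h0 : 0 < lam₀)
    (hδ'0 : 0 ≤ δ') (hδ'1 : δ' < 1)
    (hA3' : ∀ t : ℝ, 1 ≤ t → ∀ lam : ℝ, lam₀ ≤ lam →
      deriv φ (lam*t) ≤ σ * t^(-δ') * deriv φ lam)
    {μ lam : ℝ} (hμ : lam₀ ≤ μ) (hml : μ ≤ lam) :
    φ lam ≤ φ μ + (σ/(1-δ')) * (deriv φ μ * μ^δ' * lam^(1-δ')) := by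
  have hμ0 : 0 < μ := lt_of_lt_of_le h0 hμ
  have hl0 : 0 < lam := lt_of_lt_of_le hμ0 hml
  have hμp : (0:ℝ) < μ^δ' := Real.rpow_pos_of_pos hμ0 _
  have hIcc : Set.uIcc μ lam = Set.Icc μ lam := Set.uIcc_of_le hml
  have hsub : Set.Icc μ lam ⊆ Set.Ioi 0 := fun x hx => lt_of_lt_of_le hμ0 hx.1
  have hder : ∀ x ∈ Set.uIcc μ lam, DifferentiableAt ℝ φ x := by
    intro x hx; rw [hIcc] at hx; exact aux_diffAt hb.1 (lt_of_lt_of_le hμ0 hx.1)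
  have hcont : IntervalIntegrable (deriv φ) MeasureTheory.volume μ lam := by
    apply ContinuousOn.intervalIntegrable
    rw [hIcc]
    exact (aux_contDeriv hb.1).mono hsub
  have hftc := intervalIntegral.integral_deriv_eq_sub hder hcont
  have hptw : ∀ x ∈ Set.Icc μ lam, deriv φ x ≤ (σ * deriv φ μ * μ^δ') * x^(-δ') := by
    intro x hx
    have hx0 : 0 < x := lt_of_lt_of_le hμ0 hx.1
    have ht1 : 1 ≤ x/μ := (one_le_div hμ0).2 hx.1
    have h := hA3' (x/μ) ht1 μ hμ
    rw [show μ*(x/μ) = x from by field_simp] at h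
    have heq : σ * (x/μ)^(-δ') * deriv φ μ = (σ * deriv φ μ * μ^δ') * x^(-δ') := by
      rw [Real.div_rpow hx0.le hμ0.le, Real.rpow_neg hμ0.le]
      field_simp
    rw [← heq]; exact h
  have hg : IntervalIntegrable (fun x => (σ * deriv φ μ * μ^δ') * x^(-δ'))
      MeasureTheory.volume μ lam := by
    apply ContinuousOn.intervalIntegrable
    rw [hIcc]
    exact continuousOn_const.mul
      (ContinuousOn.rpow_const continuousOn_id fun x hx => Or.inl (ne_of_gt (hsub hx)))
  have hmono := intervalIntegral.integral_mono_on hml hcont hg hptw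
  rw [hftc, intervalIntegral.integral_const_mul,
    integral_rpow (Or.inl (by linarith : (-1:ℝ) < -δ'))] at hmono
  have h1d : 0 < -δ'+1 := by linarith
  have hd0 : 0 ≤ deriv φ μ := aux_d1 hb hμ0
  have hμr : 0 ≤ μ^(-δ'+1) := (Real.rpow_pos_of_pos hμ0 _).le
  have hσd : 0 ≤ σ * deriv φ μ := by
    have h1 := hA3' 1 le_rfl μ hμ
    rw [mul_one, Real.one_rpow, mul_one] at h1
    exact le_trans hd0 h1
  have hcoef : 0 ≤ σ * deriv φ μ * μ^δ' := mul_nonneg hσd hμp.le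
  have hstep : (lam^(-δ'+1) - μ^(-δ'+1))/(-δ'+1) ≤ lam^(-δ'+1)/(-δ'+1) := by
    rw [div_le_div_iff_of_pos_right h1d]
    linarith
  have hfinal := le_trans hmono (mul_le_mul_of_nonneg_left hstep hcoef)
  have heq2 : (σ * deriv φ μ * μ^δ') * (lam^(-δ'+1)/(-δ'+1))
      = (σ/(1-δ')) * (deriv φ μ * μ^δ' * lam^(1-δ')) := by
    rw [show -δ'+1 = 1-δ' by ring]
    field_simp
  rw [heq2] at hfinal
  linarith

end scaling

section scaling2
variable {φ : ℝ → ℝ}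

lemma phi_tau (hb : IsBernstein φ) {σ lam₀ δ' : ℝ} (h0 : 0 < lam₀) (hσ : 0 < σ)
    (hδ'0 : 0 ≤ δ') (hδ'1 : δ' < 1)
    (hA3' : ∀ t : ℝ, 1 ≤ t → ∀ lam : ℝ, lam₀ ≤ lam →
      deriv φ (lam*t) ≤ σ * t^(-δ') * deriv φ lam)
    {μ lam : ℝ} (hμ : lam₀ ≤ μ) (hml : μ ≤ lam) :
    φ lam ≤ (1 + 2*(σ/(1-δ'))) * ((lam/μ)^(1-δ') * φ μ) := by
  have hμ0 : 0 < μ := lt_of_lt_of_le h0 hμ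
  have hl0 : 0 < lam := lt_of_lt_of_le hμ0 hml
  have h1d : (0:ℝ) < 1 - δ' := by linarith
  have hup := phi_upper hb h0 hδ'0 hδ'1 hA3' hμ hml
  have hτ0 : 0 < (lam/μ)^(1-δ') := Real.rpow_pos_of_pos (div_pos hl0 hμ0) _
  have hτ1 : 1 ≤ (lam/μ)^(1-δ') := Real.one_le_rpow ((one_le_div hμ0).2 hml) h1d.le
  have hne : μ^(1-δ') ≠ 0 := (Real.rpow_pos_of_pos hμ0 _).ne'
  have h1 : μ^δ' * lam^(1-δ') = μ * (lam/μ)^(1-δ') := by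
    rw [Real.div_rpow hl0.le hμ0.le, ← mul_div_assoc, eq_div_iff hne,
      show μ^δ' * lam^(1-δ') * μ^(1-δ') = (μ^δ' * μ^(1-δ')) * lam^(1-δ') from by ring,
      ← Real.rpow_add hμ0, show δ' + (1-δ') = 1 from by ring, Real.rpow_one]
  have hident : deriv φ μ * μ^δ' * lam^(1-δ') ≤ 2 * ((lam/μ)^(1-δ') * φ μ) := by
    calc deriv φ μ * μ^δ' * lam^(1-δ')
        = (μ * deriv φ μ) * (lam/μ)^(1-δ') := by rw [mul_assoc, h1]; ring
      _ ≤ (2 * φ μ) * (lam/μ)^(1-δ') := mul_le_mul_of_nonneg_right (aux_d_le hb hμ0) hτ0.le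
      _ = 2 * ((lam/μ)^(1-δ') * φ μ) := by ring
  have hφμ : 0 ≤ φ μ := hb.2.1 μ hμ0
  have hσd : 0 ≤ σ/(1-δ') := div_nonneg hσ.le h1d.le
  nlinarith [hup, mul_le_mul_of_nonneg_left hident hσd,
    mul_le_mul_of_nonneg_right hτ1 hφμ]

lemma golden (hb : IsBernstein φ) (h2b : Tendsto φ atTop atTop)
    {lam₀ σ₁ δ₁ : ℝ} (h0 : 0 < lam₀) (hσ₁ : 0 < σ₁) (hδ₁ : δ₁ < 1)
    (hA5 : ∀ t : ℝ, 1 ≤ t → ∀ lam : ℝ, lam₀ ≤ lam → σ₁ * t^(1-δ₁) ≤ φ (lam*t) / φ lam) :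
    ∃ CT : ℝ, 0 < CT ∧ ∀ lam : ℝ, lam₀ ≤ lam → φ lam ≤ CT * (lam * deriv φ lam) := by
  set T : ℝ := max 2 ((2/σ₁)^((1-δ₁)⁻¹)) with hT
  have hT2 : (2:ℝ) ≤ T := le_max_left _ _
  have h2σ : (0:ℝ) < 2/σ₁ := by positivity
  have hTpow : 2 ≤ σ₁ * T^(1-δ₁) := by
    have h1 : ((2/σ₁)^((1-δ₁)⁻¹))^(1-δ₁) = 2/σ₁ := by
      rw [← Real.rpow_mul h2σ.le, inv_mul_cancel₀ (by linarith : (1:ℝ)-δ₁ ≠ 0), Real.rpow_one]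
    have h2 : (2/σ₁) ≤ T^(1-δ₁) := by
      rw [← h1]
      exact Real.rpow_le_rpow (Real.rpow_nonneg h2σ.le _) (le_max_right _ _) (by linarith)
    calc (2:ℝ) = σ₁ * (2/σ₁) := by field_simp
      _ ≤ σ₁ * T^(1-δ₁) := mul_le_mul_of_nonneg_left h2 hσ₁.le
  refine ⟨T - 1, by linarith, fun lam hlam => ?_⟩
  have hl0 : 0 < lam := lt_of_lt_of_le h0 hlam
  have hφpos : 0 < φ lam := aux_pos hb h2b hl0
  have hA := hA5 T (by linarith) lam hlam
  have h2φ : 2 * φ lam ≤ φ (lam*T) := by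
    have h3 := le_trans hTpow hA
    rw [le_div_iff₀ hφpos] at h3
    linarith
  have hs := (aux_slope hb.1 (aux_anti hb) hl0 (by nlinarith : lam < lam*T)).2
  nlinarith [hs, h2φ]

end scaling2


lemma combine_ineq {p e1 e2 C1 C2 μ lam dμ dl fμ fl : ℝ}
    (hμ0 : 0 < μ) (hml : μ ≤ lam) (hC1 : 0 ≤ C1) (hC2 : 0 ≤ C2)
    (hdl : 0 ≤ dl) (hfμ : 0 ≤ fμ) (hfl : 0 ≤ fl)
    (h1 : dμ ≤ C1 * ((lam/μ)^e1 * dl)) (h2 : fl ≤ C2 * ((lam/μ)^e2 * fμ))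
    (he : e1 + e2 ≤ p) :
    μ^p * dμ * fl ≤ (C1*C2) * (lam^p * dl * fμ) := by
  have hτ : 0 < lam/μ := div_pos (lt_of_lt_of_le hμ0 hml) hμ0
  have hτ1 : 1 ≤ lam/μ := (one_le_div hμ0).2 hml
  have hμp : (0:ℝ) ≤ μ^p := (Real.rpow_pos_of_pos hμ0 _).le
  have he1 : (0:ℝ) ≤ (lam/μ)^e1 := (Real.rpow_pos_of_pos hτ _).le
  have he2 : (0:ℝ) ≤ (lam/μ)^e2 := (Real.rpow_pos_of_pos hτ _).le
  have step1 : μ^p * dμ * fl ≤ μ^p * (C1 * ((lam/μ)^e1 * dl)) * (C2*((lam/μ)^e2*fμ)) := by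
    have a1 : μ^p * dμ ≤ μ^p * (C1 * ((lam/μ)^e1 * dl)) := mul_le_mul_of_nonneg_left h1 hμp
    exact mul_le_mul a1 h2 hfl (by positivity)
  have hee : (lam/μ)^e1 * (lam/μ)^e2 ≤ (lam/μ)^p := by
    rw [← Real.rpow_add hτ]
    exact Real.rpow_le_rpow_of_exponent_le hτ1 he
  have hmt : μ^p * ((lam/μ)^e1 * (lam/μ)^e2) ≤ lam^p := by
    calc μ^p * ((lam/μ)^e1*(lam/μ)^e2) ≤ μ^p * (lam/μ)^p := mul_le_mul_of_nonneg_left hee hμp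
      _ = lam^p := by
          rw [← Real.mul_rpow hμ0.le hτ.le]
          congr 1
          field_simp
  calc μ^p * dμ * fl ≤ μ^p * (C1 * ((lam/μ)^e1 * dl)) * (C2*((lam/μ)^e2*fμ)) := step1
    _ = (C1*C2) * ((μ^p * ((lam/μ)^e1 * (lam/μ)^e2)) * (dl * fμ)) := by ring
    _ ≤ (C1*C2) * (lam^p * (dl*fμ)) := by
        apply mul_le_mul_of_nonneg_left _ (mul_nonneg hC1 hC2)
        exact mul_le_mul_of_nonneg_right hmt (mul_nonneg hdl hfμ)
    _ = (C1*C2) * (lam^p * dl * fμ) := by ring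


lemma key_region (d : ℕ) (hd : 2 ≤ d) {φ : ℝ → ℝ} {σ lam₀ δ : ℝ}
    (SA : StandingAssumptions d φ σ lam₀ δ) :
    ∃ C : ℝ, 0 < C ∧ ∀ μ lam : ℝ, lam₀ ≤ μ → μ ≤ lam →
      μ^(((d:ℝ)+2)/2) * deriv φ μ * φ lam
        ≤ C * (lam^(((d:ℝ)+2)/2) * deriv φ lam * φ μ) := by
  obtain hb := SA.bernstein
  have h2b := SA.A2b
  have h0 := SA.hlam₀
  have hσ := SA.hσ
  set p := ((d:ℝ)+2)/2 with hp
  have hdp : (2:ℝ) ≤ (d:ℝ) := by exact_mod_cast hd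
  have hp2 : 2 ≤ p := by rw [hp]; linarith
  have hA3' : ∀ δ' : ℝ, 0 ≤ δ' → δ' ≤ δ → ∀ t : ℝ, 1 ≤ t → ∀ lam : ℝ, lam₀ ≤ lam →
      deriv φ (lam*t) ≤ σ * t^(-δ') * deriv φ lam := by
    intro δ' h1 h2 t ht lam hlam
    have hl0 : 0 < lam := lt_of_lt_of_le h0 hlam
    have hdl : 0 < deriv φ lam := aux_d_pos hb h2b hl0
    have h3 := (div_le_iff₀ hdl).1 (SA.A3 t ht lam hlam)
    have h4 : t^(-δ) ≤ t^(-δ') := Real.rpow_le_rpow_of_exponent_le ht (by linarith)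
    calc deriv φ (lam*t) ≤ σ * t^(-δ) * deriv φ lam := h3
      _ ≤ σ * t^(-δ') * deriv φ lam :=
          mul_le_mul_of_nonneg_right (mul_le_mul_of_nonneg_left h4 hσ.le) hdl.le
  rcases Nat.lt_or_ge d 3 with hd2 | hd3
  · -- case d = 2 : use (A-4)
    have hdeq : d = 2 := le_antisymm (by omega) hd
    obtain ⟨σ₀, hσ₀, δ₀, hδ₀0, hδ₀2, hA4⟩ := SA.A4 hdeq
    set δ' : ℝ := max 0 (δ₀ - 1) with hδ'
    have hδ'0 : (0:ℝ) ≤ δ' := le_max_left _ _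
    have hδ'δ : δ' ≤ δ := max_le SA.hδ0.le (by linarith [SA.hδ1])
    have hδ'1 : δ' < 1 := max_lt one_pos (by linarith [SA.hδ1])
    have h1d : (0:ℝ) < 1 - δ' := by linarith
    refine ⟨σ₀⁻¹ * (1 + 2*(σ/(1-δ'))), by positivity, fun μ lam hμ hml => ?_⟩
    have hμ0 : 0 < μ := lt_of_lt_of_le h0 hμ
    have hl0 : 0 < lam := lt_of_lt_of_le hμ0 hml
    have hτ : 0 < lam/μ := div_pos hl0 hμ0
    have hdμ : 0 < deriv φ μ := aux_d_pos hb h2b hμ0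
    have h1 : deriv φ μ ≤ σ₀⁻¹ * ((lam/μ)^δ₀ * deriv φ lam) := by
      have hA := hA4 (lam/μ) ((one_le_div hμ0).2 hml) μ hμ
      rw [show μ * (lam/μ) = lam from by field_simp] at hA
      have hX := (le_div_iff₀ hdμ).1 hA
      rw [Real.rpow_neg hτ.le] at hX
      have hτp : (0:ℝ) < (lam/μ)^δ₀ := Real.rpow_pos_of_pos hτ _
      have hY := mul_le_mul_of_nonneg_left hX
        (by positivity : (0:ℝ) ≤ σ₀⁻¹ * (lam/μ)^δ₀)
      calc deriv φ μ = σ₀⁻¹ * (lam/μ)^δ₀ * (σ₀ * ((lam/μ)^δ₀)⁻¹ * deriv φ μ) := by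
            field_simp [hσ₀.ne', hτp.ne']
        _ ≤ σ₀⁻¹ * (lam/μ)^δ₀ * deriv φ lam := hY
        _ = σ₀⁻¹ * ((lam/μ)^δ₀ * deriv φ lam) := by ring
    have h2 := phi_tau hb h0 hσ hδ'0 hδ'1 (hA3' δ' hδ'0 hδ'δ) hμ hml
    have hsum : δ₀ + (1-δ') ≤ p := by
      have : (d:ℝ) = 2 := by rw [hdeq]; norm_num
      have h6 : δ₀ - 1 ≤ δ' := le_max_right _ _
      rw [hp, this]
      linarith
    have := combine_ineq hμ0 hml (by positivity) (by positivity : (0:ℝ) ≤ 1 + 2*(σ/(1-δ')))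
      (aux_d1 hb hl0) (hb.2.1 μ hμ0) (hb.2.1 lam hl0) h1 h2 hsum
    linarith
  rcases le_or_gt δ (1/2) with h5 | h5
  · -- δ ≤ 1/2 : use (A-5)
    obtain ⟨σ₁, hσ₁, δ₁, hδδ₁, hδ₁1, hA5⟩ := SA.A5 h5
    obtain ⟨CT, hCT, hgold⟩ := golden hb h2b h0 hσ₁ hδ₁1 hA5
    refine ⟨2*CT, by positivity, fun μ lam hμ hml => ?_⟩
    have hμ0 : 0 < μ := lt_of_lt_of_le h0 hμ
    have hl0 : 0 < lam := lt_of_lt_of_le hμ0 hml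
    have hfμ : 0 ≤ φ μ := hb.2.1 μ hμ0
    have hfl : 0 ≤ φ lam := hb.2.1 lam hl0
    have hdl0 : 0 ≤ deriv φ lam := aux_d1 hb hl0
    have t1 : μ * deriv φ μ ≤ 2 * φ μ := aux_d_le hb hμ0
    have t2 : φ lam ≤ CT * (lam * deriv φ lam) := hgold lam (le_trans hμ hml)
    have t3 : μ^(p-1) ≤ lam^(p-1) := Real.rpow_le_rpow hμ0.le hml (by linarith)
    have hμp1 : (0:ℝ) ≤ μ^(p-1) := (Real.rpow_pos_of_pos hμ0 _).le
    have e1 : μ^p = μ^(p-1)*μ := by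
      rw [← Real.rpow_add_one hμ0.ne' (p-1)]
      norm_num
    have e2 : lam^p = lam^(p-1)*lam := by
      rw [← Real.rpow_add_one hl0.ne' (p-1)]
      norm_num
    calc μ^p * deriv φ μ * φ lam
        = μ^(p-1) * (μ*deriv φ μ) * φ lam := by rw [e1]; ring
      _ ≤ μ^(p-1) * (2*φ μ) * φ lam := by
          exact mul_le_mul_of_nonneg_right (mul_le_mul_of_nonneg_left t1 hμp1) hfl
      _ ≤ μ^(p-1) * (2*φ μ) * (CT*(lam*deriv φ lam)) := by
          exact mul_le_mul_of_nonneg_left t2 (by positivity)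
      _ ≤ lam^(p-1) * (2*φ μ) * (CT*(lam*deriv φ lam)) := by
          refine mul_le_mul_of_nonneg_right
            (mul_le_mul_of_nonneg_right t3 (by positivity)) ?_
          exact mul_nonneg hCT.le (mul_nonneg hl0.le hdl0)
      _ = 2*CT * ((lam^(p-1)*lam) * deriv φ lam * φ μ) := by ring
      _ = 2*CT * (lam^p * deriv φ lam * φ μ) := by rw [← e2]
  · -- d ≥ 3 and δ > 1/2 : use the CBF bound and δ' = 1/2
    have h1d : (0:ℝ) < 1 - (1/2 : ℝ) := by norm_num
    refine ⟨4 * (1 + 2*(σ/(1-(1/2:ℝ)))), by positivity, fun μ lam hμ hml => ?_⟩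
    have hμ0 : 0 < μ := lt_of_lt_of_le h0 hμ
    have hl0 : 0 < lam := lt_of_lt_of_le hμ0 hml
    have hτ : 0 < lam/μ := div_pos hl0 hμ0
    have hr2 : (lam/μ)^((2:ℝ)) = (lam/μ)*(lam/μ) := by
      rw [show (2:ℝ) = ((2:ℕ):ℝ) from by norm_num, Real.rpow_natCast]
      ring
    have h1 : deriv φ μ ≤ 4*((lam/μ)^((2:ℝ))*deriv φ lam) := by
      rw [hr2]
      have key := deriv_scale hb SA.A1 hμ0 hml
      have hμ2 : (0:ℝ) < μ^2 := by positivity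
      have hRHS : μ^2 * (4*((lam/μ)*(lam/μ)*deriv φ lam)) = 4*(lam^2*deriv φ lam) := by
        field_simp
      have hfin : μ^2*deriv φ μ ≤ μ^2*(4*((lam/μ)*(lam/μ)*deriv φ lam)) := by
        rw [hRHS]; exact key
      exact le_of_mul_le_mul_left hfin hμ2
    have h2 := phi_tau hb h0 hσ (by norm_num : (0:ℝ) ≤ 1/2) (by norm_num : (1/2:ℝ) < 1)
      (hA3' (1/2) (by norm_num) h5.le) hμ hml
    have hsum : (2:ℝ) + (1-(1/2:ℝ)) ≤ p := by
      have : (3:ℝ) ≤ (d:ℝ) := by exact_mod_cast hd3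
      rw [hp]
      linarith
    have := combine_ineq hμ0 hml (by norm_num : (0:ℝ) ≤ 4)
      (by positivity : (0:ℝ) ≤ 1 + 2*(σ/(1-(1/2:ℝ))))
      (aux_d1 hb hl0) (hb.2.1 μ hμ0) (hb.2.1 lam hl0) h1 h2 hsum
    linarith


lemma master_ineq (d : ℕ) (hd : 2 ≤ d) {φ : ℝ → ℝ} {σ lam₀ δ : ℝ}
    (SA : StandingAssumptions d φ σ lam₀ δ) :
    ∃ c : ℝ, 0 < c ∧ ∀ μ lam : ℝ, 1/4 ≤ μ → μ ≤ lam →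
      μ^(((d:ℝ)+2)/2) * deriv φ μ * φ lam
        ≤ c * (lam^(((d:ℝ)+2)/2) * deriv φ lam * φ μ) := by
  obtain ⟨C, hC, hkey⟩ := key_region d hd SA
  obtain hb := SA.bernstein
  have h2b := SA.A2b
  have h0 := SA.hlam₀
  set p := ((d:ℝ)+2)/2 with hp
  have hp0 : 0 ≤ p := by
    rw [hp]
    have : (0:ℝ) ≤ (d:ℝ) := Nat.cast_nonneg d
    linarith
  set Λ : ℝ := max lam₀ (1/4) with hΛ
  have hΛ4 : (1/4:ℝ) ≤ Λ := le_max_right _ _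
  have hΛ0 : (0:ℝ) < Λ := lt_of_lt_of_le (by norm_num) hΛ4
  have hΛl : lam₀ ≤ Λ := le_max_left _ _
  have h14 : (0:ℝ) < 1/4 := by norm_num
  have hd14 : 0 < deriv φ (1/4) := aux_d_pos hb h2b h14
  have hdΛ : 0 < deriv φ Λ := aux_d_pos hb h2b hΛ0
  have hφ14 : 0 < φ (1/4) := aux_pos hb h2b h14
  have hφΛ : 0 < φ Λ := aux_pos hb h2b hΛ0
  have hr14 : (0:ℝ) < (1/4:ℝ)^p := Real.rpow_pos_of_pos h14 _
  have hrΛ : (0:ℝ) < Λ^p := Real.rpow_pos_of_pos hΛ0 _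
  set Den : ℝ := (1/4:ℝ)^p * deriv φ Λ * φ (1/4) with hDen
  set Num : ℝ := Λ^p * deriv φ (1/4) * φ Λ with hNum
  have hDen0 : 0 < Den := mul_pos (mul_pos hr14 hdΛ) hφ14
  have hNum0 : 0 < Num := mul_pos (mul_pos hrΛ hd14) hφΛ
  set C₀ : ℝ := Num / Den with hC₀def
  have hC₀ : 0 < C₀ := div_pos hNum0 hDen0
  have compact : ∀ μ lam : ℝ, 1/4 ≤ μ → μ ≤ lam → lam ≤ Λ →
      μ^p*deriv φ μ*φ lam ≤ C₀ * (lam^p*deriv φ lam*φ μ) := by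
    intro μ lam hμ hml hlΛ
    have hμ0 : 0 < μ := lt_of_lt_of_le h14 hμ
    have hl0 : 0 < lam := lt_of_lt_of_le hμ0 hml
    have b1 : μ^p ≤ Λ^p := Real.rpow_le_rpow hμ0.le (le_trans hml hlΛ) hp0
    have b2 : deriv φ μ ≤ deriv φ (1/4) :=
      aux_anti hb (Set.mem_Ioi.2 h14) (Set.mem_Ioi.2 hμ0) hμ
    have b3 : φ lam ≤ φ Λ := aux_mono hb hl0 hlΛ
    have hup : μ^p*deriv φ μ*φ lam ≤ Num := by
      refine mul_le_mul (mul_le_mul b1 b2 (aux_d1 hb hμ0) hrΛ.le) b3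
        (hb.2.1 lam hl0) (mul_nonneg hrΛ.le hd14.le)
    have b4 : (1/4:ℝ)^p ≤ lam^p := Real.rpow_le_rpow (by norm_num) (le_trans hμ hml) hp0
    have b5 : deriv φ Λ ≤ deriv φ lam :=
      aux_anti hb (Set.mem_Ioi.2 hl0) (Set.mem_Ioi.2 hΛ0) hlΛ
    have b6 : φ (1/4) ≤ φ μ := aux_mono hb h14 hμ
    have hdown : Den ≤ lam^p*deriv φ lam*φ μ := by
      refine mul_le_mul (mul_le_mul b4 b5 hdΛ.le ?_) b6 hφ14.le ?_
      · exact (Real.rpow_pos_of_pos hl0 _).le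
      · exact mul_nonneg (Real.rpow_pos_of_pos hl0 _).le (aux_d1 hb hl0)
    calc μ^p*deriv φ μ*φ lam ≤ Num := hup
      _ = C₀ * Den := by
          rw [hC₀def]
          field_simp
      _ ≤ C₀ * (lam^p*deriv φ lam*φ μ) := mul_le_mul_of_nonneg_left hdown hC₀.le
  refine ⟨C + C₀ + C₀*C, by positivity, fun μ lam hμ hml => ?_⟩
  have hμ0 : 0 < μ := lt_of_lt_of_le h14 hμ
  have hl0 : 0 < lam := lt_of_lt_of_le hμ0 hml
  have hRHS0 : 0 ≤ lam^p*deriv φ lam*φ μ :=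
    mul_nonneg (mul_nonneg (Real.rpow_pos_of_pos hl0 _).le (aux_d1 hb hl0)) (hb.2.1 μ hμ0)
  have hCC : 0 < C₀*C := mul_pos hC₀ hC
  rcases le_or_gt Λ μ with hcase | hcase
  · refine le_trans (hkey μ lam (le_trans hΛl hcase) hml) ?_
    exact mul_le_mul_of_nonneg_right (by linarith) hRHS0
  rcases le_or_gt lam Λ with hcase2 | hcase2
  · refine le_trans (compact μ lam hμ hml hcase2) ?_
    exact mul_le_mul_of_nonneg_right (by linarith) hRHS0
  · have h1 := compact μ Λ hμ hcase.le le_rfl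
    have h2 := hkey Λ lam hΛl hcase2.le
    have hP : 0 < Λ^p*deriv φ Λ*φ Λ := mul_pos (mul_pos hrΛ hdΛ) hφΛ
    have hmul := mul_le_mul h1 h2
      (mul_nonneg (mul_nonneg hrΛ.le hdΛ.le) (hb.2.1 lam hl0))
      (mul_nonneg hC₀.le (mul_nonneg (mul_nonneg hrΛ.le hdΛ.le) (hb.2.1 μ hμ0)))
    have hX : (μ^p*deriv φ μ*φ lam) * (Λ^p*deriv φ Λ*φ Λ)
        ≤ ((C₀*C) * (lam^p*deriv φ lam*φ μ)) * (Λ^p*deriv φ Λ*φ Λ) := by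
      calc (μ^p*deriv φ μ*φ lam) * (Λ^p*deriv φ Λ*φ Λ)
          = (μ^p*deriv φ μ*φ Λ) * (Λ^p*deriv φ Λ*φ lam) := by ring
        _ ≤ (C₀*(Λ^p*deriv φ Λ*φ μ)) * (C*(lam^p*deriv φ lam*φ Λ)) := hmul
        _ = ((C₀*C) * (lam^p*deriv φ lam*φ μ)) * (Λ^p*deriv φ Λ*φ Λ) := by ring
    refine le_trans (le_of_mul_le_mul_right hX hP) ?_
    exact mul_le_mul_of_nonneg_right (by linarith) hRHS0


/-- Inequality (4.2) of Kang–Kim: under the standing assumptions there is `c > 0` such that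
`φ'(t^{-2}) / (φ(t^{-2}) t^{d+2}) ≤ c φ'(s^{-2}) / (φ(s^{-2}) s^{d+2})` for `0 < s ≤ t ≤ 2`. -/
theorem green_density_quasi_monotone (d : ℕ) (hd : 2 ≤ d)
    (φ : ℝ → ℝ) (σ lam₀ δ : ℝ) (hφ : StandingAssumptions d φ σ lam₀ δ) :
    ∃ c : ℝ, 0 < c ∧ ∀ s t : ℝ, 0 < s → s ≤ t → t ≤ 2 →
      deriv φ (t ^ (-2 : ℝ)) / (φ (t ^ (-2 : ℝ)) * t ^ ((d : ℝ) + 2)) ≤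
        c * (deriv φ (s ^ (-2 : ℝ)) / (φ (s ^ (-2 : ℝ)) * s ^ ((d : ℝ) + 2))) := by
  obtain ⟨c, hc, hmain⟩ := master_ineq d hd hφ
  obtain hb := hφ.bernstein
  have h2b := hφ.A2b
  refine ⟨c, hc, fun s t hs hst ht2 => ?_⟩
  set p := ((d:ℝ)+2)/2 with hp
  have ht0 : 0 < t := lt_of_lt_of_le hs hst
  set μ : ℝ := t^(-2:ℝ) with hμdef
  set lam : ℝ := s^(-2:ℝ) with hldef
  have hμ0 : 0 < μ := Real.rpow_pos_of_pos ht0 _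
  have hl0 : 0 < lam := Real.rpow_pos_of_pos hs _
  have hsq : ∀ x:ℝ, 0 < x → x^(-2:ℝ) = (x*x)⁻¹ := by
    intro x hx
    rw [show (-2:ℝ) = -((2:ℕ):ℝ) from by norm_num, Real.rpow_neg hx.le, Real.rpow_natCast,
      pow_two]
  have hμ4 : 1/4 ≤ μ := by
    rw [hμdef, hsq t ht0]
    have h1 : t*t ≤ 4 := by nlinarith
    have h2 : (4:ℝ)⁻¹ ≤ (t*t)⁻¹ := by
      apply inv_anti₀ (by nlinarith) h1
    linarith
  have hml : μ ≤ lam := by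
    rw [hμdef, hldef, hsq t ht0, hsq s hs]
    apply inv_anti₀ (by nlinarith) (by nlinarith)
  have hTp : t^((d:ℝ)+2) = (μ^p)⁻¹ := by
    have h1 : μ^p = t^(-((d:ℝ)+2)) := by
      rw [hμdef, ← Real.rpow_mul ht0.le]
      congr 1
      rw [hp]; ring
    rw [h1, Real.rpow_neg ht0.le, inv_inv]
  have hSp : s^((d:ℝ)+2) = (lam^p)⁻¹ := by
    have h1 : lam^p = s^(-((d:ℝ)+2)) := by
      rw [hldef, ← Real.rpow_mul hs.le]
      congr 1
      rw [hp]; ring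
    rw [h1, Real.rpow_neg hs.le, inv_inv]
  have hμp : 0 < μ^p := Real.rpow_pos_of_pos hμ0 _
  have hlp : 0 < lam^p := Real.rpow_pos_of_pos hl0 _
  have hφμ : 0 < φ μ := aux_pos hb h2b hμ0
  have hφl : 0 < φ lam := aux_pos hb h2b hl0
  have hkey := hmain μ lam hμ4 hml
  rw [hTp, hSp]
  have e1 : deriv φ μ / (φ μ * (μ^p)⁻¹) = μ^p * deriv φ μ / φ μ := by
    field_simp [hφμ.ne', hμp.ne']
  have e2 : deriv φ lam / (φ lam * (lam^p)⁻¹) = lam^p * deriv φ lam / φ lam := by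
    field_simp [hφl.ne', hlp.ne']
  rw [e1, e2, ← mul_div_assoc, div_le_div_iff₀ hφμ hφl]
  ring_nf
  ring_nf at hkey
  linarith
end
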